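/- arXiv:1507.06862 — 2 statements merged into one kernel-verified Lean document; each statement's English description precedes it below -/
import Mathlib

section
/- Let 𝔖 be an arithmetic cofinite G-semimatroid, let A∈𝒞̲, and let X,Y∈𝒞_A. Since, by normality and translativity, stab(x)=stab(y) whenever Gx=Gy, the groups Γ^X and Γ^Y coincide; call this group Γ^A. Then: (i) W(X) and W(Y) are conjugate subgroups of Γ^A; (ii) m_𝔖(A) equals the index [W(X) : h_X(G)] of the image of h_X in W(X). -/
/-!
Translativity makes the orbit map injective on every central set, so any two `X, Z ∈ 𝒞_A`
differ by a family of group elements: `Z = γ.X` with `γ ∈ W(X)`. Two such sets `γ.X, δ.X` are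
`G`-translates exactly when `δ ∈ h_X(G) γ`, which counts `𝒞_A / G` as `[W(X) : h_X(G)]`.
For `Y = c.X` one has `γ.Y = (γc).X`, so `W(Y) = W(X) c⁻¹`, and as `W(X)` is a group containing
`c` this is `W(X) = c W(X) c⁻¹`.
-/


open scoped Classical Pointwise


/-- A finitary semimatroid on the ground set `S`: a nonempty, finite-dimensional
simplicial complex `C` of finite subsets of `S` (containing all singletons), together
with a rank function satisfying (R1)-(R3), (CR1), (CR2). -/
structure FinSemimatroid (S : Type*) [DecidableEq S] where
  C : Set (Finset S)
  rk : Finset S → ℕ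
  nonempty : C.Nonempty
  downClosed : ∀ ⦃X Y : Finset S⦄, X ∈ C → Y ⊆ X → Y ∈ C
  singleton_mem : ∀ x : S, ({x} : Finset S) ∈ C
  finDim : ∃ d : ℕ, ∀ X ∈ C, X.card ≤ d
  r1 : ∀ X ∈ C, rk X ≤ X.card
  r2 : ∀ ⦃X Y : Finset S⦄, X ∈ C → Y ∈ C → X ⊆ Y → rk X ≤ rk Y
  r3 : ∀ ⦃X Y : Finset S⦄, X ∈ C → Y ∈ C → X ∪ Y ∈ C →
    rk (X ∪ Y) + rk (X ∩ Y) ≤ rk X + rk Y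
  cr1 : ∀ ⦃X Y : Finset S⦄, X ∈ C → Y ∈ C → rk X = rk (X ∩ Y) → X ∪ Y ∈ C
  cr2 : ∀ ⦃X Y : Finset S⦄, X ∈ C → Y ∈ C → rk X < rk Y →
    ∃ y ∈ Y, y ∉ X ∧ insert y X ∈ C

namespace FinSemimatroid

variable {S : Type*} [DecidableEq S]

/-- The closure of a central set. -/
def cl (M : FinSemimatroid S) (X : Finset S) : Set S :=
  {y : S | insert y X ∈ M.C ∧ M.rk (insert y X) = M.rk X}

/-- A flat is a closed central set. -/
def IsFlat (M : FinSemimatroid S) (X : Finset S) : Prop :=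
  X ∈ M.C ∧ M.cl X = (X : Set S)

/-- The poset of flats, ordered by inclusion. -/
abbrev Flats (M : FinSemimatroid S) : Type _ := {X : Finset S // M.IsFlat X}

/-- A simple finitary semimatroid. -/
def Simple (M : FinSemimatroid S) : Prop :=
  (∀ x : S, M.rk {x} = 1) ∧
    ∀ x y : S, x ≠ y → ({x, y} : Finset S) ∈ M.C → M.rk {x, y} = 2

end FinSemimatroid

/-- A poset is chain-finite if all its chains are finite. -/
def ChainFinite (L : Type*) [PartialOrder L] : Prop :=
  ∀ c : Set L, IsChain (· ≤ ·) c → c.Finite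

/-- An atom of a bounded-below poset: an element covering the minimum. -/
def PosetAtom {L : Type*} [PartialOrder L] (a : L) : Prop :=
  ∃ bot : L, IsBot bot ∧ bot ⋖ a

/-- `L` (with rank function `rk`) is a finite geometric lattice (finite, bounded below,
a lattice, ranked by `rk`, atomic and semimodular) with at most `N` atoms. -/
def IsFinGeomLatticeAtMost (L : Type*) [PartialOrder L] (rk : L → ℕ) (N : ℕ) : Prop :=
  Finite L ∧
    ∃ bot : L, IsBot bot ∧
      (∀ x y : L, ∃ m : L, IsGLB {x, y} m) ∧
      (∀ x y : L, ∃ j : L, IsLUB {x, y} j) ∧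
      (∀ x y : L, x ⋖ y → rk y = rk x + 1) ∧
      (∀ x : L, ∃ A : Set L, (∀ a ∈ A, bot ⋖ a) ∧ IsLUB A x) ∧
      (∀ x y m j : L, IsGLB {x, y} m → IsLUB {x, y} j → rk j + rk m ≤ rk x + rk y) ∧
      Nat.card {a : L | bot ⋖ a} ≤ N
/-- A `G`-semimatroid: an action of `G` on a finitary semimatroid, preserving
centrality and rank. -/
structure GSemimatroid (G S : Type*) [Group G] [MulAction G S] [DecidableEq S]
    extends FinSemimatroid S where
  smul_mem : ∀ (g : G) ⦃X : Finset S⦄, X ∈ C → X.image (g • ·) ∈ C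
  rk_smul : ∀ (g : G) ⦃X : Finset S⦄, X ∈ C → rk (X.image (g • ·)) = rk X

namespace GSemimatroid

variable {G S : Type*} [Group G] [MulAction G S] [DecidableEq S]

/-- The set of orbits `E_𝔖 = S/G`. -/
abbrev E (G S : Type*) [Group G] [MulAction G S] : Type _ :=
  Quotient (MulAction.orbitRel G S)

/-- The orbit of a point. -/
def orbOf (G : Type*) {S : Type*} [Group G] [MulAction G S] (x : S) : E G S :=
  Quotient.mk (MulAction.orbitRel G S) x

/-- `X̲`: the set of orbits met by `X`. -/
def under (G : Type*) {S : Type*} [Group G] [MulAction G S] (X : Finset S) :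
    Set (E G S) :=
  orbOf G '' (X : Set S)

variable (M : GSemimatroid G S)

/-- `𝒞̲ = {X̲ : X ∈ 𝒞}`. -/
def CQ : Set (Set (E G S)) := {A | ∃ X ∈ M.C, under G X = A}

/-- `rk̲ A = max { rk X : X ∈ 𝒞, X̲ ⊆ A }`. -/
noncomputable def rkQ (A : Set (E G S)) : ℕ :=
  sSup {n : ℕ | ∃ X ∈ M.C, under G X ⊆ A ∧ M.rk X = n}

/-- `𝒞_A`: the central sets lying over `A`. -/
def CA (A : Set (E G S)) : Set (Finset S) := {X | X ∈ M.C ∧ under G X = A}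

/-- The type of central sets. -/
abbrev Cen : Type _ := {X : Finset S // X ∈ M.C}

/-- The `G`-orbit relation on central sets. -/
def cenRel (X Y : M.Cen) : Prop := ∃ g : G, X.1.image (g • ·) = Y.1

/-- The set `𝒞/G` of orbits of central sets. -/
def COrb : Type _ := Quot M.cenRel

/-- The action is cofinite if `𝒞/G` is finite. -/
def Cofinite : Prop := Finite M.COrb

/-- `m_𝔖(A) = |𝒞_A / G|`. -/
noncomputable def m (A : Set (E G S)) : ℕ :=
  Nat.card {O : M.COrb // ∃ X : M.Cen, under G X.1 = A ∧ Quot.mk M.cenRel X = O}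

def WeaklyTranslative : Prop :=
  ∀ (g : G) (x : S), ({x, g • x} : Finset S) ∈ M.C →
    M.rk {x, g • x} = M.rk ({x} : Finset S)

def Translative : Prop :=
  ∀ (g : G) (x : S), ({x, g • x} : Finset S) ∈ M.C → g • x = x

def Centered : Prop := ∃ X ∈ M.C, under G X = (Set.univ : Set (E G S))

def Normal (_M : GSemimatroid G S) : Prop :=
  ∀ x : S, Subgroup.Normal (MulAction.stabilizer G x)

def AlmostArithmetic : Prop := M.Translative ∧ M.Normal

/-- The action is arithmetic: almost-arithmetic, and for every central `X` the set
`W(X) ⊆ Γ^X` is a subgroup (expressed via representative families of group elements). -/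
def Arithmetic : Prop :=
  M.AlmostArithmetic ∧
    ∀ ⦃X : Finset S⦄, X ∈ M.C → ∀ γ δ : S → G,
      X.image (fun x => γ x • x) ∈ M.C → X.image (fun x => δ x • x) ∈ M.C →
        X.image (fun x => (γ x * δ x) • x) ∈ M.C ∧
          X.image (fun x => (γ x)⁻¹ • x) ∈ M.C

/-- Remove from `X` all elements of the orbit `a₀`. -/
noncomputable def strip (a₀ : E G S) (X : Finset S) : Finset S :=
  X.filter (fun x => orbOf G x ≠ a₀)

/-- The Tutte polynomial of a `G`-semimatroid, as a function `ℤ × ℤ → ℤ`. -/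
noncomputable def Tutte (x y : ℤ) : ℤ :=
  ∑ᶠ A ∈ M.CQ, (M.m A : ℤ) * (x - 1) ^ (M.rkQ Set.univ - M.rkQ A) *
    (y - 1) ^ (Nat.card A - M.rkQ A)

end GSemimatroid

open GSemimatroid

/-- For a family `γ` of group elements indexed by orbits (representing an element of
`Γ^A = Π_{a ∈ A} Γ(a)`), the set `γ.X`. -/
noncomputable def gammaSet (G : Type*) {S : Type*} [Group G] [MulAction G S]
    [DecidableEq S] (γ : GSemimatroid.E G S → G) (X : Finset S) : Finset S :=
  X.image (fun x => γ (GSemimatroid.orbOf G x) • x)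

theorem Nat.card_quot_eq_of_surjective {α β : Type*} {r : α → α → Prop} {f : α → β}
    (hf : Function.Surjective f) (hr : ∀ a b, f a = f b ↔ r a b) :
    Nat.card (Quot r) = Nat.card β := by
  refine Nat.card_eq_of_bijective (Quot.lift f fun a b => (hr a b).2) ⟨?_, ?_⟩
  · rintro ⟨a⟩ ⟨b⟩ h
    exact Quot.sound ((hr a b).1 h)
  · exact fun b => (hf b).imp' (Quot.mk r) fun _ => id

namespace GSemimatroid

variable {G S : Type*} [Group G] [MulAction G S]

theorem orbOf_smul (g : G) (x : S) : orbOf G (g • x) = orbOf G x :=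
  Quotient.sound ⟨g, rfl⟩

theorem orbOf_eq_orbOf_iff {x y : S} : orbOf G x = orbOf G y ↔ ∃ g : G, g • y = x :=
  ⟨fun h => MulAction.mem_orbit_iff.1 (Quotient.exact h), fun ⟨g, hg⟩ => hg ▸ orbOf_smul g y⟩

variable [DecidableEq S]

theorem under_gammaSet (γ : E G S → G) (X : Finset S) :
    under G (gammaSet G γ X) = under G X := by
  ext a
  simp only [under, gammaSet, Finset.coe_image, Set.image_image, orbOf_smul]

theorem gammaSet_gammaSet (γ δ : E G S → G) (X : Finset S) :
    gammaSet G γ (gammaSet G δ X) = gammaSet G (γ * δ) X := by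
  simp only [gammaSet, Finset.image_image]
  exact Finset.image_congr fun x _ => by simp [orbOf_smul, mul_smul]

variable (M : GSemimatroid G S)

theorem equivalence_cenRel : Equivalence M.cenRel where
  refl X := ⟨1, by simp only [one_smul, Finset.image_id']⟩
  symm := by
    rintro X Y ⟨g, hg⟩
    exact ⟨g⁻¹, by simp [← hg, Finset.image_image, Function.comp_def]⟩
  trans := by
    rintro X Y Z ⟨g, hg⟩ ⟨h, hh⟩
    exact ⟨h * g, by simp [← hh, ← hg, Finset.image_image, Function.comp_def, mul_smul]⟩

variable {M}

theorem Translative.injOn_orbOf (htr : M.Translative) {X : Finset S} (hX : X ∈ M.C) :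
    Set.InjOn (orbOf G) (X : Set S) := by
  intro x hx y hy hxy
  obtain ⟨g, rfl⟩ := orbOf_eq_orbOf_iff.1 hxy
  have hpair : ({y, g • y} : Finset S) ∈ M.C :=
    M.downClosed hX (Finset.insert_subset hy (Finset.singleton_subset_iff.2 hx))
  exact htr g y hpair

theorem Translative.gammaSet_eq_iff (htr : M.Translative) {γ δ : E G S → G} {X : Finset S}
    (hδ : gammaSet G δ X ∈ M.C) :
    gammaSet G γ X = gammaSet G δ X ↔ ∀ x ∈ X, γ (orbOf G x) • x = δ (orbOf G x) • x := by
  refine ⟨fun h x hx => ?_, fun h => Finset.image_congr h⟩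
  have hγx : γ (orbOf G x) • x ∈ gammaSet G δ X := h ▸ Finset.mem_image_of_mem _ hx
  have hδx : δ (orbOf G x) • x ∈ gammaSet G δ X := Finset.mem_image_of_mem _ hx
  exact Translative.injOn_orbOf htr hδ hγx hδx (by rw [orbOf_smul, orbOf_smul])

theorem Translative.exists_gammaSet_eq (htr : M.Translative) {X Z : Finset S}
    (hX : X ∈ M.C) (hZ : Z ∈ M.C) (h : under G X = under G Z) :
    ∃ γ : E G S → G, gammaSet G γ X = Z := by
  have hmove : ∀ a, ∃ g : G, ∀ x ∈ X, orbOf G x = a → g • x ∈ Z := by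
    intro a
    by_cases ha : a ∈ under G X
    · obtain ⟨x₀, hx₀, rfl⟩ := ha
      obtain ⟨z, hz, hzx⟩ : orbOf G x₀ ∈ under G Z := h ▸ ⟨x₀, hx₀, rfl⟩
      obtain ⟨g, rfl⟩ := orbOf_eq_orbOf_iff.1 hzx
      exact ⟨g, fun x hx hxx => Translative.injOn_orbOf htr hX hx hx₀ hxx ▸ hz⟩
    · exact ⟨1, fun x hx hxa => (ha ⟨x, hx, hxa⟩).elim⟩
  choose γ hγ using hmove
  refine ⟨γ, subset_antisymm (Finset.image_subset_iff.2 fun x hx => hγ _ x hx rfl) ?_⟩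
  intro z hz
  obtain ⟨x, hx, hxz⟩ : orbOf G z ∈ under G X := h ▸ ⟨z, hz, rfl⟩
  have hmoved : γ (orbOf G x) • x = z :=
    Translative.injOn_orbOf htr hZ (hγ _ x hx rfl) hz (by rw [orbOf_smul, hxz])
  exact Finset.mem_image.2 ⟨x, hx, hmoved⟩

/-- `W(X)`, with elements of `Γ^X` represented by families `S → G`. -/
def Arithmetic.W (har : M.Arithmetic) {X : Finset S} (hX : X ∈ M.C) : Subgroup (S → G) where
  carrier := {γ | X.image (fun x => γ x • x) ∈ M.C}
  one_mem' := by simpa using hX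
  mul_mem' hγ hδ := (har.2 hX _ _ hγ hδ).1
  inv_mem' hγ := (har.2 hX _ _ hγ hγ).2

theorem Arithmetic.exists_conj_gammaSet_mem_iff (har : M.Arithmetic) {A : Set (E G S)}
    {X Y : Finset S} (hX : X ∈ M.CA A) (hY : Y ∈ M.CA A) :
    ∃ c : E G S → G, ∀ γ : E G S → G,
      gammaSet G γ Y ∈ M.C ↔ gammaSet G (fun a => c a * γ a * (c a)⁻¹) X ∈ M.C := by
  obtain ⟨c, rfl⟩ := Translative.exists_gammaSet_eq har.1.1 hX.1 hY.1 (hX.2.trans hY.2.symm)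
  have hc : c ∘ orbOf G ∈ Arithmetic.W har hX.1 := hY.1
  refine ⟨c, fun γ => ?_⟩
  rw [gammaSet_gammaSet]
  change γ ∘ orbOf G * c ∘ orbOf G ∈ Arithmetic.W har hX.1 ↔
    c ∘ orbOf G * γ ∘ orbOf G * (c ∘ orbOf G)⁻¹ ∈ Arithmetic.W har hX.1
  -- both sides say `γ ∈ W(X)`, since `c ∈ W(X)`
  rw [mul_assoc, Subgroup.mul_mem_cancel_left _ hc, Subgroup.mul_mem_cancel_right _ hc,
    Subgroup.mul_mem_cancel_right _ (inv_mem hc)]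

theorem Translative.cenRel_gammaSet_iff (htr : M.Translative) {X : Finset S}
    {γ δ : E G S → G} (hγ : gammaSet G γ X ∈ M.C) (hδ : gammaSet G δ X ∈ M.C) :
    M.cenRel ⟨gammaSet G γ X, hγ⟩ ⟨gammaSet G δ X, hδ⟩ ↔
      ∃ g : G, ∀ x ∈ X, (g * γ (orbOf G x)) • x = δ (orbOf G x) • x := by
  refine exists_congr fun g => ?_
  change gammaSet G (fun _ => g) (gammaSet G γ X) = _ ↔ _
  rw [gammaSet_gammaSet, Translative.gammaSet_eq_iff htr hδ]
  rfl

theorem Translative.m_eq_card_quot (htr : M.Translative) {A : Set (E G S)} {X : Finset S}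
    (hX : X ∈ M.CA A) :
    M.m A = Nat.card (Quot (fun γ δ : {γ : E G S → G // gammaSet G γ X ∈ M.C} =>
      ∃ g : G, ∀ x ∈ X, (g * γ.1 (orbOf G x)) • x = δ.1 (orbOf G x) • x)) := by
  refine (Nat.card_quot_eq_of_surjective (f := fun γ =>
    ⟨Quot.mk M.cenRel ⟨gammaSet G γ.1 X, γ.2⟩,
      ⟨_, (under_gammaSet γ.1 X).trans hX.2, rfl⟩⟩) ?_ ?_).symm
  · rintro ⟨_, Z, hZA, rfl⟩
    obtain ⟨γ, hγ⟩ := Translative.exists_gammaSet_eq htr hX.1 Z.2 (hX.2.trans hZA.symm)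
    exact ⟨⟨γ, hγ ▸ Z.2⟩, by simp only [hγ]⟩
  · rintro ⟨γ, hγ⟩ ⟨δ, hδ⟩
    exact Subtype.ext_iff.trans <| ((equivalence_cenRel M).quot_mk_eq_iff _ _).trans <|
      Translative.cenRel_gammaSet_iff htr hγ hδ

end GSemimatroid

/-- Elements of `Γ^A` are represented by families `γ : E → G` indexed by orbits, and the index
`[W(X) : h_X(G)]` is the number of classes of `W(X)` under left translation by `h_X(G)`. -/
theorem arithmetic_W_conjugate_and_index_general
    {G S : Type*} [Group G] [MulAction G S] [DecidableEq S]
    (M : GSemimatroid G S) (har : M.Arithmetic)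
    (A : Set (E G S)) (X Y : Finset S)
    (hX : X ∈ M.CA A) (hY : Y ∈ M.CA A) :
    (∃ c : E G S → G, ∀ γ : E G S → G,
      gammaSet G γ Y ∈ M.C ↔ gammaSet G (fun a => c a * γ a * (c a)⁻¹) X ∈ M.C) ∧
    M.m A = Nat.card (Quot (fun γ δ : {γ : E G S → G // gammaSet G γ X ∈ M.C} =>
      ∃ g : G, ∀ x ∈ X, (g * γ.1 (orbOf G x)) • x = δ.1 (orbOf G x) • x)) :=
  ⟨Arithmetic.exists_conj_gammaSet_mem_iff har hX hY, Translative.m_eq_card_quot har.1.1 hX⟩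

/-- For an arithmetic cofinite `G`-semimatroid and `X, Y ∈ 𝒞_A`
(identifying `Γ^X = Γ^Y = Γ^A` via equality of stabilizers, elements of `Γ^A` being
represented by families `γ : E → G` of group elements indexed by orbits):
(i) `W(X)` and `W(Y)` are conjugate subgroups of `Γ^A`;
(ii) `m_𝔖(A) = [W(X) : h_X(G)]`, the index being the number of classes of elements of
`W(X)` modulo left translation by the diagonal image `h_X(G)`. -/
theorem arithmetic_W_conjugate_and_index
    {G S : Type*} [Group G] [MulAction G S] [DecidableEq S]
    (M : GSemimatroid G S) (hcof : M.Cofinite) (har : M.Arithmetic)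
    (A : Set (E G S)) (hA : A ∈ M.CQ) (X Y : Finset S)
    (hX : X ∈ M.CA A) (hY : Y ∈ M.CA A) :
    (∃ c : E G S → G, ∀ γ : E G S → G,
      gammaSet G γ Y ∈ M.C ↔ gammaSet G (fun a => c a * γ a * (c a)⁻¹) X ∈ M.C) ∧
    M.m A = Nat.card (Quot (fun γ δ : {γ : E G S → G // gammaSet G γ X ∈ M.C} =>
      ∃ g : G, ∀ x ∈ X, (g * γ.1 (orbOf G x)) • x = δ.1 (orbOf G x) • x)) :=
  arithmetic_W_conjugate_and_index_general M har A X Y hX hY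
end

section
/- Let 𝔖 be a weakly translative cofinite G-semimatroid. Then for every flat x∈ℒ, the interval [0̂, Gx] in the quotient poset P_𝔖 and the interval [cl(∅), x] in ℒ are isomorphic as posets. In particular, every lower interval of P_𝔖 is a geometric lattice. -/
open scoped Classical Pointwise


open GSemimatroid

namespace GSemimatroid

variable {G S : Type*} [Group G] [MulAction G S] [DecidableEq S]

/-- The flats of the underlying semimatroid. -/
abbrev Flat (M : GSemimatroid G S) : Type _ :=
  {X : Finset S // M.toFinSemimatroid.IsFlat X}

/-- The `G`-orbit relation on flats. -/
def flatOrbRel (M : GSemimatroid G S) (X Y : M.Flat) : Prop :=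
  ∃ g : G, X.1.image (g • ·) = Y.1

/-- The quotient poset `P_𝔖 = ℒ/G` (as a quotient set). -/
def PS (M : GSemimatroid G S) : Type _ := Quot M.flatOrbRel

/-- The order on `P_𝔖`: `GX ≤ GY` iff `X ⊆ gY` for some `g ∈ G`. -/
def PSle (M : GSemimatroid G S) (p q : M.PS) : Prop :=
  ∃ (X Y : M.Flat) (g : G),
    Quot.mk M.flatOrbRel X = p ∧ Quot.mk M.flatOrbRel Y = q ∧ X.1 ⊆ Y.1.image (g • ·)

/-- The rank function on `P_𝔖`, induced by `rk`. -/
def prk (M : GSemimatroid G S) : M.PS → ℕ :=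
  Quot.lift (fun X => M.rk X.1) (by
    rintro X Y ⟨g, hg⟩
    try dsimp only
    rw [← hg]
    exact (M.rk_smul g X.2.1).symm)

end GSemimatroid

/-!
Weak translativity makes the flats below a flat `x` rigid: if `Z ⊆ x` and `g • Z ⊆ x`, then
for `z ∈ Z` the pair `{z, g • z}` is central of rank `rk {z}`, so `g • z ∈ cl {z} ⊆ Z`, and
`g • Z = Z` by counting. Hence every orbit below `G x` has exactly one representative inside
`x`, and `Z ↦ G Z` is an order isomorphism from `[cl ∅, x]` onto `[0̂, G x]`.
Inside the central set `x` the semimatroid behaves like a matroid, so `[cl ∅, x]` is a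
geometric lattice: meets are intersections, joins are closures of unions, covers raise the
rank by one by (CR2), and semimodularity is (R3).
-/

namespace FinSemimatroid

variable {S : Type*} [DecidableEq S] {M : FinSemimatroid S}

lemma mem_cl_of_mem {Z : Finset S} {z : S} (hZ : Z ∈ M.C) (hz : z ∈ Z) : z ∈ M.cl Z := by
  have h : insert z Z = Z := Finset.insert_eq_self.2 hz
  exact ⟨by rw [h]; exact hZ, by rw [h]⟩

/-- (CR1) makes `insert y K ∪ V = insert y V` central, and (R3) then bounds its rank. -/
lemma mem_cl_of_subset {K V : Finset S} {y : S} (hV : V ∈ M.C) (hKV : K ⊆ V)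
    (hy : y ∈ M.cl K) : y ∈ M.cl V := by
  obtain ⟨hyK, hrk⟩ := hy
  have hK : K ∈ M.C := M.downClosed hV hKV
  have hsub : K ⊆ insert y K ∩ V := Finset.subset_inter (Finset.subset_insert y K) hKV
  have hinter : insert y K ∩ V ∈ M.C := M.downClosed hyK Finset.inter_subset_left
  have hrk_inter : M.rk (insert y K ∩ V) = M.rk (insert y K) :=
    le_antisymm (M.r2 hinter hyK Finset.inter_subset_left)
      (hrk ▸ M.r2 hK hinter hsub)
  have hunion : insert y K ∪ V = insert y V := by
    rw [Finset.insert_union, Finset.union_eq_right.2 hKV]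
  have hyV : insert y V ∈ M.C := hunion ▸ M.cr1 hyK hV hrk_inter.symm
  have hsubmod := M.r3 hyK hV (hunion ▸ hyV)
  rw [hunion, hrk_inter, hrk] at hsubmod
  exact ⟨hyV, le_antisymm (by omega) (M.r2 hV hyV (Finset.subset_insert y V))⟩

lemma IsFlat.mem_of_mem_cl {K V : Finset S} {y : S} (hV : M.IsFlat V) (hKV : K ⊆ V)
    (hy : y ∈ M.cl K) : y ∈ V := by
  have hyV := mem_cl_of_subset hV.1 hKV hy
  rwa [hV.2] at hyV

lemma IsFlat.cl_empty_subset {F₀ Z : Finset S} (hF₀ : (F₀ : Set S) = M.cl ∅)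
    (hZ : M.IsFlat Z) : F₀ ⊆ Z :=
  fun _ hy => hZ.mem_of_mem_cl (Finset.empty_subset Z) (hF₀ ▸ hy)

lemma IsFlat.inter {Z W : Finset S} (hZ : M.IsFlat Z) (hW : M.IsFlat W) (hC : Z ∩ W ∈ M.C) :
    M.IsFlat (Z ∩ W) := by
  refine ⟨hC, Set.Subset.antisymm (fun y hy => ?_) (fun _ hy => mem_cl_of_mem hC hy)⟩
  rw [Finset.coe_inter]
  exact ⟨hZ.mem_of_mem_cl Finset.inter_subset_left hy,
    hW.mem_of_mem_cl Finset.inter_subset_right hy⟩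

lemma rk_insert_le {Z : Finset S} {w : S} (hZ : Z ∈ M.C) (hins : insert w Z ∈ M.C) :
    M.rk (insert w Z) ≤ M.rk Z + 1 := by
  have hunion : {w} ∪ Z = insert w Z := (Finset.insert_eq w Z).symm
  have hsubmod := M.r3 (M.singleton_mem w) hZ (hunion ▸ hins)
  have hw : M.rk {w} ≤ 1 := Finset.card_singleton w ▸ M.r1 _ (M.singleton_mem w)
  rw [hunion] at hsubmod
  omega

lemma IsFlat.rk_lt_of_ssubset {Z W : Finset S} (hZ : M.IsFlat Z) (hW : W ∈ M.C) (h : Z ⊂ W) :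
    M.rk Z < M.rk W := by
  obtain ⟨w, hwW, hwZ⟩ := Finset.exists_of_ssubset h
  have hsub : insert w Z ⊆ W := Finset.insert_subset hwW h.subset
  have hins : insert w Z ∈ M.C := M.downClosed hW hsub
  by_contra! hle
  have hrk : M.rk (insert w Z) = M.rk Z :=
    le_antisymm ((M.r2 hins hW hsub).trans hle) (M.r2 hZ.1 hins (Finset.subset_insert w Z))
  exact hwZ (hZ.mem_of_mem_cl subset_rfl ⟨hins, hrk⟩)

lemma IsFlat.rk_insert {Z : Finset S} {w : S} (hZ : M.IsFlat Z) (hins : insert w Z ∈ M.C)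
    (hw : w ∉ Z) : M.rk (insert w Z) = M.rk Z + 1 :=
  le_antisymm (rk_insert_le hZ.1 hins) (hZ.rk_lt_of_ssubset hins (Finset.ssubset_insert hw))

lemma rk_union_eq_of_subset_cl {A D : Finset S} (hC : A ∪ D ∈ M.C)
    (hD : ∀ d ∈ D, d ∈ M.cl A) : M.rk (A ∪ D) = M.rk A := by
  induction D using Finset.induction_on with
  | empty => rw [Finset.union_empty]
  | insert d D _ ih =>
    rw [Finset.union_insert] at hC ⊢
    have hC' : A ∪ D ∈ M.C := M.downClosed hC (Finset.subset_insert d _)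
    have hd := mem_cl_of_subset hC' Finset.subset_union_left (hD d (Finset.mem_insert_self d D))
    rw [hd.2, ih hC' fun e he => hD e (Finset.mem_insert_of_mem he)]

variable (M) in
/-- For a flat `x` and `A ⊆ x` we have `cl A ⊆ x`, so this is `cl A` as a finset. -/
noncomputable def clIn (x A : Finset S) : Finset S := x.filter (· ∈ M.cl A)

section clIn

variable {x A : Finset S}

lemma clIn_subset : M.clIn x A ⊆ x := Finset.filter_subset _ _

lemma mem_clIn (hx : M.IsFlat x) (hA : A ⊆ x) {y : S} : y ∈ M.clIn x A ↔ y ∈ M.cl A := by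
  simp only [clIn, Finset.mem_filter, and_iff_right_iff_imp]
  exact hx.mem_of_mem_cl hA

lemma subset_clIn (hx : M.IsFlat x) (hA : A ⊆ x) : A ⊆ M.clIn x A := fun _ ha =>
  (mem_clIn hx hA).2 (mem_cl_of_mem (M.downClosed hx.1 hA) ha)

lemma rk_clIn (hx : M.IsFlat x) (hA : A ⊆ x) : M.rk (M.clIn x A) = M.rk A := by
  have hunion : A ∪ M.clIn x A = M.clIn x A := Finset.union_eq_right.2 (subset_clIn hx hA)
  rw [← hunion]
  refine rk_union_eq_of_subset_cl ?_ fun _ hy => (mem_clIn hx hA).1 hy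
  rw [hunion]
  exact M.downClosed hx.1 clIn_subset

lemma isFlat_clIn (hx : M.IsFlat x) (hA : A ⊆ x) : M.IsFlat (M.clIn x A) := by
  have hC : M.clIn x A ∈ M.C := M.downClosed hx.1 clIn_subset
  refine ⟨hC, Set.Subset.antisymm (fun y hy => ?_) (fun _ hy => mem_cl_of_mem hC hy)⟩
  have hsub : insert y A ⊆ insert y (M.clIn x A) :=
    Finset.insert_subset_insert y (subset_clIn hx hA)
  have hins : insert y A ∈ M.C := M.downClosed hy.1 hsub
  have hle := M.r2 hins hy.1 hsub
  rw [hy.2, rk_clIn hx hA] at hle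
  exact (mem_clIn hx hA).2
    ⟨hins, le_antisymm hle (M.r2 (M.downClosed hx.1 hA) hins (Finset.subset_insert y A))⟩

lemma clIn_subset_of_subset (hx : M.IsFlat x) (hA : A ⊆ x) {V : Finset S} (hV : M.IsFlat V)
    (hAV : A ⊆ V) : M.clIn x A ⊆ V := fun _ hy =>
  hV.mem_of_mem_cl hAV ((mem_clIn hx hA).1 hy)

end clIn

lemma rk_lt_rk_of_lt {a b : M.Flats} (h : a < b) : M.rk a.1 < M.rk b.1 :=
  a.2.rk_lt_of_ssubset b.2.1 h

section Interval

variable {F₀ x : M.Flats}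

lemma finite_Icc : Finite (Set.Icc F₀ x) :=
  Finite.of_injective
    (fun a : Set.Icc F₀ x => (⟨a.1.1, Finset.mem_powerset.2 a.2.2⟩ : x.1.powerset))
    fun _ _ h => Subtype.ext (Subtype.ext (Subtype.mk.inj h))

noncomputable def iccSpan (A : Finset S) (hF₀A : F₀.1 ⊆ A) (hAx : A ⊆ x.1) : Set.Icc F₀ x :=
  ⟨⟨M.clIn x.1 A, isFlat_clIn x.2 hAx⟩, hF₀A.trans (subset_clIn x.2 hAx), clIn_subset⟩

section iccSpan

variable {A : Finset S} (hF₀A : F₀.1 ⊆ A) (hAx : A ⊆ x.1)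

lemma subset_iccSpan : A ⊆ (iccSpan A hF₀A hAx).1.1 := subset_clIn x.2 hAx

lemma iccSpan_le {b : Set.Icc F₀ x} (hAb : A ⊆ b.1.1) : iccSpan A hF₀A hAx ≤ b :=
  clIn_subset_of_subset x.2 hAx b.1.2 hAb

lemma rk_iccSpan : M.rk (iccSpan A hF₀A hAx).1.1 = M.rk A := rk_clIn x.2 hAx

end iccSpan

def iccInf (a b : Set.Icc F₀ x) : Set.Icc F₀ x :=
  ⟨⟨a.1.1 ∩ b.1.1,
    a.1.2.inter b.1.2 (M.downClosed x.2.1 (Finset.inter_subset_left.trans a.2.2))⟩,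
    Finset.subset_inter a.2.1 b.2.1, Finset.inter_subset_left.trans a.2.2⟩

noncomputable def iccSup (a b : Set.Icc F₀ x) : Set.Icc F₀ x :=
  iccSpan (a.1.1 ∪ b.1.1) (fun _ h => Finset.subset_union_left (a.2.1 h))
    (Finset.union_subset a.2.2 b.2.2)

lemma isGLB_iccInf (a b : Set.Icc F₀ x) : IsGLB {a, b} (iccInf a b) := by
  refine ⟨?_, fun c hc => Finset.subset_inter (hc (Set.mem_insert a _)) (hc (by simp))⟩
  rintro c (rfl | rfl)
  exacts [Finset.inter_subset_left, Finset.inter_subset_right]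

lemma isLUB_iccSup (a b : Set.Icc F₀ x) : IsLUB {a, b} (iccSup a b) := by
  have hspan := subset_iccSpan (fun _ h => Finset.subset_union_left (a.2.1 h))
    (Finset.union_subset a.2.2 b.2.2)
  refine ⟨?_, fun c hc => iccSpan_le _ _ ?_⟩
  · rintro c (rfl | rfl)
    exacts [Finset.subset_union_left.trans hspan, Finset.subset_union_right.trans hspan]
  · exact Finset.union_subset (hc (Set.mem_insert a _)) (hc (by simp))

lemma rk_iccSup_add_rk_iccInf_le (a b : Set.Icc F₀ x) :
    M.rk (iccSup a b).1.1 + M.rk (iccInf a b).1.1 ≤ M.rk a.1.1 + M.rk b.1.1 := by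
  rw [iccSup, rk_iccSpan]
  exact M.r3 a.1.2.1 b.1.2.1 (M.downClosed x.2.1 (Finset.union_subset a.2.2 b.2.2))

lemma covBy_of_rk_eq {a b : Set.Icc F₀ x} (hab : a < b) (hrk : M.rk b.1.1 = M.rk a.1.1 + 1) :
    a ⋖ b := by
  refine ⟨hab, fun c hac hcb => ?_⟩
  have h₁ := rk_lt_rk_of_lt hac
  have h₂ := rk_lt_rk_of_lt hcb
  omega

section iccAdjoin

noncomputable def iccAdjoin (a : Set.Icc F₀ x) {w : S} (hw : w ∈ x.1) : Set.Icc F₀ x :=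
  iccSpan (insert w a.1.1) (fun _ h => Finset.mem_insert_of_mem (a.2.1 h))
    (Finset.insert_subset hw a.2.2)

variable (a : Set.Icc F₀ x) {w : S} (hw : w ∈ x.1)

lemma subset_iccAdjoin : insert w a.1.1 ⊆ (iccAdjoin a hw).1.1 := subset_iccSpan _ _

lemma iccAdjoin_le {b : Set.Icc F₀ x} (hab : a ≤ b) (hwb : w ∈ b.1.1) : iccAdjoin a hw ≤ b :=
  iccSpan_le (A := insert w a.1.1) _ _ (Finset.insert_subset hwb hab)

lemma rk_iccAdjoin (hwa : w ∉ a.1.1) : M.rk (iccAdjoin a hw).1.1 = M.rk a.1.1 + 1 := by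
  rw [iccAdjoin, rk_iccSpan,
    a.1.2.rk_insert (M.downClosed x.2.1 (Finset.insert_subset hw a.2.2)) hwa]

lemma covBy_iccAdjoin (hwa : w ∉ a.1.1) : a ⋖ iccAdjoin a hw := by
  refine covBy_of_rk_eq (lt_of_le_of_ne ((Finset.subset_insert w _).trans (subset_iccAdjoin a hw))
    fun h => hwa ?_) (rk_iccAdjoin a hw hwa)
  exact h ▸ subset_iccAdjoin a hw (Finset.mem_insert_self w _)

end iccAdjoin

lemma rk_eq_of_covBy {a b : Set.Icc F₀ x} (hab : a ⋖ b) : M.rk b.1.1 = M.rk a.1.1 + 1 := by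
  obtain ⟨w, hwb, hwa, -⟩ := M.cr2 a.1.2.1 b.1.2.1 (rk_lt_rk_of_lt hab.lt)
  have hw : w ∈ x.1 := b.2.2 hwb
  obtain rfl : iccAdjoin a hw = b :=
    (iccAdjoin_le a hw hab.le hwb).lt_or_eq.resolve_left
      (hab.2 (covBy_iccAdjoin a hw hwa).lt)
  exact rk_iccAdjoin a hw hwa

lemma exists_atoms_isLUB (h : F₀ ≤ x) (z : Set.Icc F₀ x) :
    ∃ A : Set (Set.Icc F₀ x), (∀ a ∈ A, ⟨F₀, Set.left_mem_Icc.2 h⟩ ⋖ a) ∧ IsLUB A z := by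
  set bot : Set.Icc F₀ x := ⟨F₀, Set.left_mem_Icc.2 h⟩
  refine ⟨{a | bot ⋖ a ∧ a ≤ z}, fun a ha => ha.1, fun a ha => ha.2, fun u hu w hwz => ?_⟩
  by_cases hwF₀ : w ∈ F₀.1
  · exact u.2.1 hwF₀
  · have hw : w ∈ x.1 := z.2.2 hwz
    exact hu ⟨covBy_iccAdjoin bot hw hwF₀, iccAdjoin_le bot hw z.2.1 hwz⟩
      (subset_iccAdjoin bot hw (Finset.mem_insert_self w _))

theorem isFinGeomLatticeAtMost_Icc (h : F₀ ≤ x) :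
    IsFinGeomLatticeAtMost (Set.Icc F₀ x) (fun z => M.rk z.1.1)
      (Nat.card {a : Set.Icc F₀ x | ⟨F₀, Set.left_mem_Icc.2 h⟩ ⋖ a}) := by
  refine ⟨finite_Icc, ⟨F₀, Set.left_mem_Icc.2 h⟩, fun a => a.2.1,
    fun a b => ⟨_, isGLB_iccInf a b⟩, fun a b => ⟨_, isLUB_iccSup a b⟩,
    fun _ _ => rk_eq_of_covBy, exists_atoms_isLUB h, fun a b m j hm hj => ?_, le_rfl⟩
  rw [hm.unique (isGLB_iccInf a b), hj.unique (isLUB_iccSup a b)]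
  exact rk_iccSup_add_rk_iccInf_le a b

end Interval

end FinSemimatroid

namespace GSemimatroid

variable {G S : Type*} [Group G] [MulAction G S] [DecidableEq S] {M : GSemimatroid G S}

open FinSemimatroid

lemma smul_mem_cl (g : G) {X : Finset S} {y : S} (hy : y ∈ M.cl X) : g • y ∈ M.cl (g • X) := by
  have hX : X ∈ M.C := M.downClosed hy.1 (Finset.subset_insert y X)
  refine ⟨?_, ?_⟩ <;> rw [← Finset.smul_finset_insert]
  exacts [M.smul_mem g hy.1, (M.rk_smul g hy.1).trans (hy.2.trans (M.rk_smul g hX).symm)]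

lemma isFlat_smul {Z : Finset S} (hZ : M.IsFlat Z) (g : G) : M.IsFlat (g • Z) := by
  have hC : g • Z ∈ M.C := M.smul_mem g hZ.1
  refine ⟨hC, Set.Subset.antisymm (fun y hy => ?_) (fun _ hy => mem_cl_of_mem hC hy)⟩
  have hy' := smul_mem_cl g⁻¹ hy
  rw [inv_smul_smul] at hy'
  exact Finset.inv_smul_mem_iff.1 (hZ.mem_of_mem_cl subset_rfl hy')

/-- For `z ∈ Z`, weak translativity puts `g • z` in `cl {z} ⊆ Z`. -/
lemma smul_eq_self_of_subset (hwt : M.WeaklyTranslative) {x Z : Finset S} (hx : x ∈ M.C)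
    (hZ : M.IsFlat Z) (hZx : Z ⊆ x) {g : G} (hgZx : g • Z ⊆ x) : g • Z = Z := by
  refine Finset.eq_of_subset_of_card_le (fun w hw => ?_) (Finset.card_smul_finset g Z).ge
  obtain ⟨z, hz, rfl⟩ := Finset.mem_smul_finset.1 hw
  have hpair : ({z, g • z} : Finset S) ∈ M.C :=
    M.downClosed hx (Finset.insert_subset (hZx hz) (Finset.singleton_subset_iff.2 (hgZx hw)))
  have hins : insert (g • z) {z} = ({z, g • z} : Finset S) := Finset.pair_comm _ _
  have hcl : g • z ∈ M.cl {z} := ⟨hins ▸ hpair, hins ▸ hwt g z hpair⟩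
  exact hZ.mem_of_mem_cl (Finset.singleton_subset_iff.2 hz) hcl

lemma flatOrbRel_equivalence : Equivalence M.flatOrbRel where
  refl X := ⟨1, one_smul G X.1⟩
  symm := fun ⟨g, hg⟩ => ⟨g⁻¹, by rw [← hg]; exact inv_smul_smul g _⟩
  trans := fun ⟨g, hg⟩ ⟨h, hh⟩ => ⟨h * g, by rw [← hh, ← hg]; exact mul_smul h g _⟩

lemma mk_eq_mk_iff (X Y : M.Flat) :
    Quot.mk M.flatOrbRel X = Quot.mk M.flatOrbRel Y ↔ ∃ g : G, g • X.1 = Y.1 := by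
  rw [Quot.eq]
  exact flatOrbRel_equivalence.eqvGen_iff

lemma psle_mk_mk_iff (X Y : M.Flat) :
    M.PSle (Quot.mk _ X) (Quot.mk _ Y) ↔ ∃ g : G, X.1 ⊆ g • Y.1 := by
  constructor
  · rintro ⟨X', Y', g, hX, hY, hsub⟩
    obtain ⟨h, hh⟩ := (mk_eq_mk_iff X' X).1 hX
    obtain ⟨l, hl⟩ := (mk_eq_mk_iff Y' Y).1 hY
    refine ⟨h * g * l⁻¹, ?_⟩
    rw [← hh, ← hl, mul_smul, mul_smul, inv_smul_smul]
    exact Finset.smul_finset_subset_smul_finset hsub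
  · rintro ⟨g, hg⟩
    exact ⟨X, Y, g, rfl, rfl, hg⟩

section Icc

variable {F₀ x : M.Flat}

def orbitOfIcc (Z : Set.Icc F₀ x) : {p : M.PS // M.PSle p (Quot.mk M.flatOrbRel x)} :=
  ⟨Quot.mk _ Z.1, (psle_mk_mk_iff Z.1 x).2 ⟨1, by rw [one_smul]; exact Z.2.2⟩⟩

lemma psle_orbitOfIcc_iff (hwt : M.WeaklyTranslative) (a b : Set.Icc F₀ x) :
    M.PSle (orbitOfIcc a).1 (orbitOfIcc b).1 ↔ a ≤ b := by
  refine ⟨fun hab => ?_, fun hab => (psle_mk_mk_iff _ _).2 ⟨1, by rw [one_smul]; exact hab⟩⟩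
  obtain ⟨g, hg⟩ := (psle_mk_mk_iff _ _).1 hab
  have hga := Finset.subset_smul_finset_iff.1 hg
  have hfix : g⁻¹ • a.1.1 = a.1.1 := smul_eq_self_of_subset hwt x.2.1 a.1.2 a.2.2 (hga.trans b.2.2)
  rwa [hfix] at hga

lemma orbitOfIcc_injective (hwt : M.WeaklyTranslative) :
    Function.Injective (orbitOfIcc : Set.Icc F₀ x → _) := by
  intro a b hab
  refine le_antisymm ((psle_orbitOfIcc_iff hwt a b).1 ?_) ((psle_orbitOfIcc_iff hwt b a).1 ?_) <;>
    rw [hab] <;> exact (psle_orbitOfIcc_iff hwt b b).2 le_rfl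

lemma orbitOfIcc_surjective (hF₀ : (F₀.1 : Set S) = M.cl ∅) :
    Function.Surjective (orbitOfIcc : Set.Icc F₀ x → _) := by
  rintro ⟨p, hp⟩
  obtain ⟨Z, rfl⟩ := Quot.exists_rep p
  obtain ⟨g, hg⟩ := (psle_mk_mk_iff Z x).1 hp
  have hZ : M.IsFlat (g⁻¹ • Z.1) := isFlat_smul Z.2 g⁻¹
  refine ⟨⟨⟨g⁻¹ • Z.1, hZ⟩, hZ.cl_empty_subset hF₀, Finset.subset_smul_finset_iff.1 hg⟩, ?_⟩
  exact Subtype.ext ((mk_eq_mk_iff _ _).2 ⟨g, smul_inv_smul g Z.1⟩)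

end Icc

end GSemimatroid

theorem quotientPoset_lower_interval_iso_general
    {G S : Type*} [Group G] [MulAction G S] [DecidableEq S]
    (M : GSemimatroid G S) (hwt : M.WeaklyTranslative)
    (x : M.Flat) (F0 : M.Flat) (hF0 : (↑F0.1 : Set S) = M.cl ∅) :
    (∃ f : {p : M.PS // M.PSle p (Quot.mk M.flatOrbRel x)} → ↥(Set.Icc F0 x),
      Function.Bijective f ∧
        ∀ p q : {p : M.PS // M.PSle p (Quot.mk M.flatOrbRel x)},
          (M.PSle p.1 q.1 ↔ f p ≤ f q)) ∧
    ∃ N : ℕ, IsFinGeomLatticeAtMost ↥(Set.Icc F0 x) (fun z => M.rk z.1.1) N := by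
  let e := Equiv.ofBijective _ ⟨orbitOfIcc_injective hwt, orbitOfIcc_surjective (x := x) hF0⟩
  refine ⟨⟨e.symm, e.symm.bijective, fun p q => ?_⟩, _,
    FinSemimatroid.isFinGeomLatticeAtMost_Icc (x.2.cl_empty_subset hF0)⟩
  obtain ⟨a, rfl⟩ := e.surjective p
  obtain ⟨b, rfl⟩ := e.surjective q
  rw [e.symm_apply_apply, e.symm_apply_apply]
  exact psle_orbitOfIcc_iff hwt a b

/-- For a weakly translative cofinite `G`-semimatroid, every lower
interval `[0̂, Gx]` of the quotient poset `P_𝔖` is isomorphic (as a poset) to the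
interval `[cl ∅, x]` of the semilattice of flats `ℒ`.  In particular (via the
isomorphism) every lower interval of `P_𝔖` is a (finite) geometric lattice. -/
theorem quotientPoset_lower_interval_iso
    {G S : Type*} [Group G] [MulAction G S] [DecidableEq S]
    (M : GSemimatroid G S) (hcof : M.Cofinite) (hwt : M.WeaklyTranslative)
    (x : M.Flat) (F0 : M.Flat) (hF0 : (↑F0.1 : Set S) = M.cl ∅) :
    (∃ f : {p : M.PS // M.PSle p (Quot.mk M.flatOrbRel x)} → ↥(Set.Icc F0 x),
      Function.Bijective f ∧
        ∀ p q : {p : M.PS // M.PSle p (Quot.mk M.flatOrbRel x)},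
          (M.PSle p.1 q.1 ↔ f p ≤ f q)) ∧
    ∃ N : ℕ, IsFinGeomLatticeAtMost ↥(Set.Icc F0 x) (fun z => M.rk z.1.1) N :=
  quotientPoset_lower_interval_iso_general M hwt x F0 hF0
end
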